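/- arXiv:1005.3483 — 2 statements merged into one kernel-verified Lean document; each statement's English description precedes it below -/
import Mathlib

section
/- Fix H ∈ (1/2, 1) and T > 0, and let g : [0,T] → ℝ^d be measurable with Euclidean norm |g(t)| ≤ 1 for all t. Then ∫_0^T | ∫_s^T c_H (t/s)^{H−1/2} (t−s)^{H−3/2} g(t) dt |² ds ≤ T^{2H}. -/
open Set MeasureTheory intervalIntegral

/-- The Volterra kernel of fractional Brownian motion with Hurst parameter `H` and
normalizing constant `cH`:
`K_H(t,s) = c_H s^{1/2-H} ∫_s^t (u-s)^{H-3/2} u^{H-1/2} du` for `0 < s < t`, `0` otherwise. -/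
noncomputable def fbmKernel (cH H t s : ℝ) : ℝ :=
  if 0 < s ∧ s < t then
    cH * s ^ ((1:ℝ)/2 - H) * ∫ u in s..t, (u - s) ^ (H - 3/2) * u ^ (H - 1/2)
  else 0

/-!
Since `∂K_H/∂t ≥ 0` and `|g| ≤ 1`, the inner integral has norm at most
`∫_s^T ∂K_H/∂t (t,s) dt = K_H(T,s)`. Squaring and integrating in `s` leaves
`∫_0^T K_H(T,s)² ds`, which is the variance `T^{2H}` by the normalization of `c_H` at `s = t = T`.
-/

theorem intervalIntegral.norm_integral_smul_le_integral {E : Type*} [NormedAddCommGroup E]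
    [NormedSpace ℝ E] {k : ℝ → ℝ} {g : ℝ → E} {a b : ℝ} (hab : a ≤ b)
    (hk : IntervalIntegrable k volume a b) (hk_nonneg : ∀ t ∈ Ioc a b, 0 ≤ k t)
    (hg : ∀ t, ‖g t‖ ≤ 1) :
    ‖∫ t in a..b, k t • g t‖ ≤ ∫ t in a..b, k t := by
  refine norm_integral_le_of_norm_le hab (Filter.Eventually.of_forall fun t ht => ?_) hk
  rw [norm_smul, Real.norm_of_nonneg (hk_nonneg t ht)]
  exact mul_le_of_le_one_right (hk_nonneg t ht) (hg t)

section KernelDerivative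

variable (cH H : ℝ) {s t T : ℝ}

lemma fbmKernel_deriv_nonneg (hcH : 0 < cH) (hs : 0 ≤ s) (hst : s ≤ t) :
    0 ≤ cH * (t / s) ^ (H - 1/2) * (t - s) ^ (H - 3/2) := by
  have := Real.rpow_nonneg (div_nonneg (hs.trans hst) hs) (H - 1/2)
  have := Real.rpow_nonneg (sub_nonneg.2 hst) (H - 3/2)
  positivity

lemma intervalIntegrable_fbmKernel_deriv (hH : 1/2 < H) :
    IntervalIntegrable (fun t => cH * (t / s) ^ (H - 1/2) * (t - s) ^ (H - 3/2)) volume s T := by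
  have hsing : IntervalIntegrable (fun t : ℝ => (t - s) ^ (H - 3/2)) volume s T := by
    simpa using (intervalIntegrable_rpow' (a := 0) (b := T - s) (r := H - 3/2)
      (by linarith)).comp_sub_right s
  have hcont : ContinuousOn (fun t : ℝ => cH * (t / s) ^ (H - 1/2)) (uIcc s T) := by
    refine continuousOn_const.mul (ContinuousOn.rpow_const (continuousOn_id.div_const s) ?_)
    exact fun _ _ => Or.inr (by linarith)
  exact hsing.continuousOn_mul hcont

lemma integral_fbmKernel_deriv (hs : 0 < s) (hsT : s < T) :
    ∫ t in s..T, cH * (t / s) ^ (H - 1/2) * (t - s) ^ (H - 3/2) = fbmKernel cH H T s := by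
  rw [fbmKernel, if_pos ⟨hs, hsT⟩, ← intervalIntegral.integral_const_mul]
  refine integral_congr fun t ht => ?_
  have ht0 : 0 < t := hs.trans_le (uIcc_of_le hsT.le ▸ ht).1
  have hs_inv : s ^ ((1:ℝ)/2 - H) = (s ^ (H - 1/2))⁻¹ := by
    rw [← Real.rpow_neg hs.le, neg_sub]
  have := Real.rpow_pos_of_pos hs (H - 1/2)
  simp only [Real.div_rpow ht0.le hs.le, hs_inv]
  field_simp

end KernelDerivative

theorem adjoint_kernel_L2_bound_general (H : ℝ) (hH : H ∈ Set.Ioo (1/2 : ℝ) 1)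
    (cH : ℝ) (hcH : 0 < cH)
    (hnorm : ∀ s t : ℝ, 0 < s → 0 < t →
      (∫ u in (0:ℝ)..(min s t), fbmKernel cH H t u * fbmKernel cH H s u)
        = (t ^ (2*H) + s ^ (2*H) - |t - s| ^ (2*H)) / 2)
    (d : ℕ) (T : ℝ) (hT : 0 < T)
    (g : ℝ → EuclideanSpace ℝ (Fin d)) (hgbd : ∀ t, ‖g t‖ ≤ 1) :
    (∫ s in (0:ℝ)..T,
        ‖∫ t in s..T, (cH * (t / s) ^ (H - 1/2) * (t - s) ^ (H - 3/2)) • g t‖ ^ 2)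
      ≤ T ^ (2*H) := by
  have hsq : ∫ s in (0:ℝ)..T, fbmKernel cH H T s ^ 2 = T ^ (2*H) := by
    have hdiag := hnorm T T hT hT
    rw [min_self, sub_self, abs_zero, Real.zero_rpow (by linarith [hH.1])] at hdiag
    simp only [sq, hdiag]
    ring
  have hsq_int : IntervalIntegrable (fun s => fbmKernel cH H T s ^ 2) volume 0 T := by
    by_contra h
    rw [intervalIntegral.integral_undef h] at hsq
    exact (Real.rpow_pos_of_pos hT _).ne hsq
  have hpointwise : ∀ s ∈ Ioo 0 T,
      ‖∫ t in s..T, (cH * (t / s) ^ (H - 1/2) * (t - s) ^ (H - 3/2)) • g t‖ ≤ fbmKernel cH H T s :=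
    fun s ⟨hs, hsT⟩ => integral_fbmKernel_deriv cH H hs hsT ▸
      norm_integral_smul_le_integral hsT.le (intervalIntegrable_fbmKernel_deriv cH H hH.1)
        (fun t ht => fbmKernel_deriv_nonneg cH H hcH hs.le ht.1.le) hgbd
  rw [← hsq, integral_of_le hT.le, integral_of_le hT.le, integral_Ioc_eq_integral_Ioo,
    integral_Ioc_eq_integral_Ioo]
  refine integral_mono_of_nonneg (.of_forall fun _ => by positivity)
    (hsq_int.1.mono_set Ioo_subset_Ioc_self) ?_
  filter_upwards [ae_restrict_mem measurableSet_Ioo] with s hs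
  exact pow_le_pow_left₀ (norm_nonneg _) (hpointwise s hs) 2

/-- for `H ∈ (1/2,1)`, `T > 0`, `c_H` normalized so that the kernel reproduces
the fBm covariance, and any measurable `g : [0,T] → ℝ^d` with `|g| ≤ 1`, one has
`∫_0^T |∫_s^T c_H (t/s)^{H-1/2}(t-s)^{H-3/2} g(t) dt|² ds ≤ T^{2H}`. -/
theorem adjoint_kernel_L2_bound (H : ℝ) (hH : H ∈ Set.Ioo (1/2 : ℝ) 1)
    (cH : ℝ) (hcH : 0 < cH)
    (hnorm : ∀ s t : ℝ, 0 < s → 0 < t →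
      (∫ u in (0:ℝ)..(min s t), fbmKernel cH H t u * fbmKernel cH H s u)
        = (t ^ (2*H) + s ^ (2*H) - |t - s| ^ (2*H)) / 2)
    (d : ℕ) (T : ℝ) (hT : 0 < T)
    (g : ℝ → EuclideanSpace ℝ (Fin d)) (hgmeas : Measurable g) (hgbd : ∀ t, ‖g t‖ ≤ 1) :
    (∫ s in (0:ℝ)..T,
        ‖∫ t in s..T, (cH * (t / s) ^ (H - 1/2) * (t - s) ^ (H - 3/2)) • g t‖ ^ 2)
      ≤ T ^ (2*H) :=
  adjoint_kernel_L2_bound_general H hH cH hcH hnorm d T hT g hgbd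
end

section
/- Fix H ∈ (1/2, 1) and T > 0, and let h ∈ L²([0,T]; ℝ^d). Define D(u) = ∫_0^u c_H (u/s)^{H−1/2} (u−s)^{H−3/2} h(s) ds for u ∈ (0,T). Then D ∈ L¹((0,T); ℝ^d) and ∫_0^t K_H(t,s) h(s) ds = ∫_0^t D(u) du for all t ∈ [0,T]. In particular, every Cameron–Martin path of fractional Brownian motion with Hurst parameter H > 1/2 is absolutely continuous, with almost-everywhere derivative D. -/
/-!
Since `K_H(t,s) = ∫_s^t ∂_u K_H(u,s) du`, both sides of the identity are iterated integrals of
`G(s,u) = ∂_u K_H(u,s) h(s)` over the triangle `0 < s < u < t`, taken in the two possible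
orders, and `D` is a marginal of `G`. So everything follows from Fubini once `G` is integrable
on `(0,t)²`. For fixed `s`, `∫ |∂_u K_H(u,s)| du ≲ s^{1/2-H}` because `H > 1/2`; and
`s ↦ s^{1/2-H}` is square integrable near `0` because `H < 1`, so Cauchy–Schwarz against
`h ∈ L²` bounds `∫∫ |G|`.
-/

open Set MeasureTheory intervalIntegral

lemma intervalIntegrable_sub_rpow {r : ℝ} (hr : -1 < r) (s b : ℝ) :
    IntervalIntegrable (fun u => (u - s) ^ r) volume s b := by
  simpa using (intervalIntegrable_rpow' (a := 0) (b := b - s) hr).comp_sub_right s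

lemma integral_sub_rpow {r : ℝ} (hr : -1 < r) (s b : ℝ) :
    ∫ u in s..b, (u - s) ^ r = (b - s) ^ (r + 1) / (r + 1) := by
  rw [integral_comp_sub_right (fun x => x ^ r), sub_self, integral_rpow (Or.inl hr),
    Real.zero_rpow (by linarith), sub_zero]

lemma intervalIntegrable_sub_rpow_mul_rpow {a b : ℝ} (ha : -1 < a) (hb : 0 ≤ b) (s T : ℝ) :
    IntervalIntegrable (fun u => (u - s) ^ a * u ^ b) volume s T :=
  (intervalIntegrable_sub_rpow ha s T).mul_continuousOn
    (Real.continuous_rpow_const hb).continuousOn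

lemma integral_sub_rpow_mul_rpow_le {a b s T : ℝ} (ha : -1 < a) (hb : 0 ≤ b) (hs : 0 ≤ s)
    (hsT : s ≤ T) :
    ∫ u in s..T, (u - s) ^ a * u ^ b ≤ T ^ b * T ^ (a + 1) / (a + 1) :=
  calc ∫ u in s..T, (u - s) ^ a * u ^ b ≤ ∫ u in s..T, (u - s) ^ a * T ^ b :=
        integral_mono_on hsT (intervalIntegrable_sub_rpow_mul_rpow ha hb s T)
          ((intervalIntegrable_sub_rpow ha s T).mul_const _) fun u hu =>
            mul_le_mul_of_nonneg_left (Real.rpow_le_rpow (hs.trans hu.1) hu.2 hb)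
              (Real.rpow_nonneg (sub_nonneg.mpr hu.1) _)
    _ = T ^ b * (T - s) ^ (a + 1) / (a + 1) := by
        rw [intervalIntegral.integral_mul_const, integral_sub_rpow ha, mul_comm, mul_div_assoc]
    _ ≤ T ^ b * T ^ (a + 1) / (a + 1) := by
        have := Real.rpow_nonneg (hs.trans hsT) b
        gcongr <;> linarith

lemma memLp_two_rpow {r : ℝ} (hr : -1/2 < r) (t : ℝ) :
    MemLp (fun s : ℝ => s ^ r) 2 (volume.restrict (Ioo 0 t)) := by
  rw [memLp_two_iff_integrable_sq
    (by fun_prop : Measurable fun s : ℝ => s ^ r).aestronglyMeasurable]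
  have hint : IntegrableOn (fun s : ℝ => s ^ (2 * r)) (Ioo 0 t) :=
    (intervalIntegrable_rpow' (a := 0) (b := t) (by linarith)).1.mono_set Ioo_subset_Ioc_self
  refine hint.congr_fun (fun s hs => ?_) measurableSet_Ioo
  rw [← Real.rpow_natCast, ← Real.rpow_mul hs.1.le, mul_comm]
  norm_num

lemma fbmKernel_le {c H s t : ℝ} (hH : 1/2 < H) (hc : 0 ≤ c) (hs : 0 < s) (hst : s < t) :
    fbmKernel c H t s ≤
      c * s ^ ((1:ℝ)/2 - H) * (t ^ (H - 1/2) * t ^ (H - 1/2) / (H - 1/2)) := by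
  rw [fbmKernel, if_pos ⟨hs, hst⟩]
  have hbound := integral_sub_rpow_mul_rpow_le (a := H - 3/2) (b := H - 1/2) (by linarith)
    (by linarith) hs.le hst.le
  rw [show H - 3/2 + 1 = H - 1/2 by ring] at hbound
  exact mul_le_mul_of_nonneg_left hbound (mul_nonneg hc (Real.rpow_nonneg hs.le _))

section Triangle

variable {E : Type*} [NormedAddCommGroup E] [NormedSpace ℝ E]

/-- `∂_u K_H(u,s) h(s)` on the triangle `0 < s < u`, with `(u/s)^{H-1/2}` split as
`s^{1/2-H} u^{H-1/2}` to match the form of `fbmKernel`. -/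
noncomputable def fbmTriangleIntegrand (cH H : ℝ) (h : ℝ → E) : ℝ × ℝ → E :=
  {p | 0 < p.1 ∧ p.1 < p.2}.indicator fun p =>
    (cH * p.1 ^ ((1:ℝ)/2 - H) * ((p.2 - p.1) ^ (H - 3/2) * p.2 ^ (H - 1/2))) • h p.1

variable (cH H : ℝ) (h : ℝ → E)

lemma fbmTriangleIntegrand_fst_section {s : ℝ} (hs : 0 < s) :
    (fun u => fbmTriangleIntegrand cH H h (s, u)) = (Ioi s).indicator fun u =>
      (cH * s ^ ((1:ℝ)/2 - H) * ((u - s) ^ (H - 3/2) * u ^ (H - 1/2))) • h s := by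
  ext u
  simp [fbmTriangleIntegrand, indicator_apply, hs]

lemma fbmTriangleIntegrand_snd_section (u : ℝ) :
    (fun s => fbmTriangleIntegrand cH H h (s, u)) = (Ioo 0 u).indicator fun s =>
      (cH * s ^ ((1:ℝ)/2 - H) * ((u - s) ^ (H - 3/2) * u ^ (H - 1/2))) • h s := by
  ext s
  simp [fbmTriangleIntegrand, indicator_apply]

lemma norm_fbmTriangleIntegrand (p : ℝ × ℝ) :
    ‖fbmTriangleIntegrand cH H h p‖ = fbmTriangleIntegrand |cH| H (fun s => ‖h s‖) p := by
  unfold fbmTriangleIntegrand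
  rw [norm_indicator_eq_indicator_norm]
  refine congrFun (indicator_congr fun p hp => ?_) p
  rw [norm_smul, smul_eq_mul, Real.norm_eq_abs, abs_mul, abs_mul, abs_mul,
    abs_of_nonneg (Real.rpow_nonneg hp.1.le _),
    abs_of_nonneg (Real.rpow_nonneg (sub_nonneg.mpr hp.2.le) _),
    abs_of_nonneg (Real.rpow_nonneg (hp.1.trans hp.2).le _)]

lemma integrableOn_fbmTriangleIntegrand_fst_section (hH : 1/2 < H) {s : ℝ} (hs : 0 < s)
    (t : ℝ) : IntegrableOn (fun u => fbmTriangleIntegrand cH H h (s, u)) (Ioo 0 t) := by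
  rw [fbmTriangleIntegrand_fst_section cH H h hs, IntegrableOn,
    integrable_indicator_iff measurableSet_Ioi, IntegrableOn,
    Measure.restrict_restrict measurableSet_Ioi]
  refine IntegrableOn.mono_set (t := Ioc s t) ?_ fun u hu => ⟨hu.1, hu.2.2.le⟩
  exact (((intervalIntegrable_sub_rpow_mul_rpow (by linarith) (by linarith) s t).1).const_mul
    _).smul_const _

lemma intervalIntegral_smul_eq_setIntegral_fbmTriangleIntegrand {u t : ℝ} (hu : 0 < u)
    (hut : u ≤ t) :
    ∫ s in (0:ℝ)..u, (cH * (u / s) ^ (H - 1/2) * (u - s) ^ (H - 3/2)) • h s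
      = ∫ s in Ioo 0 t, fbmTriangleIntegrand cH H h (s, u) := by
  rw [fbmTriangleIntegrand_snd_section, setIntegral_indicator measurableSet_Ioo,
    inter_eq_self_of_subset_right (Ioo_subset_Ioo_right hut),
    intervalIntegral.integral_of_le hu.le, integral_Ioc_eq_integral_Ioo]
  refine setIntegral_congr_fun measurableSet_Ioo fun s hs => ?_
  rw [Real.div_rpow hu.le hs.1.le, show (1:ℝ)/2 - H = -(H - 1/2) by ring,
    Real.rpow_neg hs.1.le, div_eq_mul_inv]
  ring_nf

lemma fbmKernel_smul_eq_setIntegral [CompleteSpace E] {s t : ℝ} (hs : 0 < s) (hst : s < t) :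
    fbmKernel cH H t s • h s = ∫ u in Ioo 0 t, fbmTriangleIntegrand cH H h (s, u) := by
  have hIoo : Ioo 0 t ∩ Ioi s = Ioo s t :=
    ext fun u => ⟨fun hu => ⟨hu.2, hu.1.2⟩, fun hu => ⟨⟨hs.trans hu.1, hu.2⟩, hu.1⟩⟩
  rw [fbmTriangleIntegrand_fst_section cH H h hs, setIntegral_indicator measurableSet_Ioi, hIoo,
    ← integral_Ioc_eq_integral_Ioo, ← intervalIntegral.integral_of_le hst.le,
    intervalIntegral.integral_smul_const, intervalIntegral.integral_const_mul, fbmKernel,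
    if_pos ⟨hs, hst⟩]

lemma aestronglyMeasurable_fbmTriangleIntegrand {μ ν : Measure ℝ}
    (hh : AEStronglyMeasurable h μ) :
    AEStronglyMeasurable (fbmTriangleIntegrand cH H h) (μ.prod ν) := by
  refine AEStronglyMeasurable.indicator ?_ ((measurableSet_lt measurable_const
    measurable_fst).inter (measurableSet_lt measurable_fst measurable_snd))
  exact (by fun_prop : Measurable fun p : ℝ × ℝ => cH * p.1 ^ ((1:ℝ)/2 - H) *
    ((p.2 - p.1) ^ (H - 3/2) * p.2 ^ (H - 1/2))).aestronglyMeasurable.smul hh.comp_fst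

lemma integral_norm_fbmTriangleIntegrand_le (hH : 1/2 < H) {s t : ℝ} (hs : 0 < s)
    (hst : s < t) :
    ∫ u in Ioo 0 t, ‖fbmTriangleIntegrand cH H h (s, u)‖
      ≤ |cH| * (t ^ (H - 1/2) * t ^ (H - 1/2) / (H - 1/2)) * (s ^ ((1:ℝ)/2 - H) * ‖h s‖) :=
  calc ∫ u in Ioo 0 t, ‖fbmTriangleIntegrand cH H h (s, u)‖
      = fbmKernel |cH| H t s * ‖h s‖ := by
        simp_rw [norm_fbmTriangleIntegrand]
        rw [← fbmKernel_smul_eq_setIntegral _ _ _ hs hst, smul_eq_mul]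
    _ ≤ |cH| * s ^ ((1:ℝ)/2 - H) * (t ^ (H - 1/2) * t ^ (H - 1/2) / (H - 1/2)) * ‖h s‖ := by
        gcongr
        exact fbmKernel_le hH (abs_nonneg cH) hs hst
    _ = _ := by ring

lemma integrable_fbmTriangleIntegrand (hH : H ∈ Ioo (1/2 : ℝ) 1) {t : ℝ}
    (hh : MemLp h 2 (volume.restrict (Ioo 0 t))) :
    Integrable (fbmTriangleIntegrand cH H h)
      ((volume.restrict (Ioo 0 t)).prod (volume.restrict (Ioo 0 t))) := by
  have hmeas := aestronglyMeasurable_fbmTriangleIntegrand cH H h (ν := volume.restrict (Ioo 0 t))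
    hh.aestronglyMeasurable
  have hdom : Integrable (fun s => |cH| * (t ^ (H - 1/2) * t ^ (H - 1/2) / (H - 1/2)) *
      (s ^ ((1:ℝ)/2 - H) * ‖h s‖)) (volume.restrict (Ioo 0 t)) :=
    ((memLp_two_rpow (by linarith [hH.2]) t).integrable_mul hh.norm).const_mul _
  rw [integrable_prod_iff hmeas]
  refine ⟨(ae_restrict_iff' measurableSet_Ioo).mpr (.of_forall fun s hs =>
    integrableOn_fbmTriangleIntegrand_fst_section cH H h hH.1 hs.1 t), ?_⟩
  refine hdom.mono' hmeas.norm.integral_prod_right' ((ae_restrict_iff' measurableSet_Ioo).mpr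
    (.of_forall fun s hs => ?_))
  rw [Real.norm_of_nonneg (integral_nonneg fun _ => norm_nonneg _)]
  exact integral_norm_fbmTriangleIntegrand_le cH H h hH.1 hs.1 hs.2

end Triangle

theorem cameronMartin_absolutelyContinuous_general (H : ℝ) (hH : H ∈ Set.Ioo (1/2 : ℝ) 1)
    (cH : ℝ)
    (d : ℕ) (T : ℝ)
    (h : ℝ → EuclideanSpace ℝ (Fin d))
    (hL2 : MeasureTheory.MemLp h 2 (MeasureTheory.volume.restrict (Set.Ioc 0 T))) :
    MeasureTheory.IntegrableOn
      (fun u => ∫ s in (0:ℝ)..u, (cH * (u / s) ^ (H - 1/2) * (u - s) ^ (H - 3/2)) • h s)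
      (Set.Ioo 0 T) ∧
    ∀ t ∈ Set.Icc (0:ℝ) T,
      (∫ s in (0:ℝ)..t, fbmKernel cH H t s • h s)
        = ∫ u in (0:ℝ)..t,
            ∫ s in (0:ℝ)..u, (cH * (u / s) ^ (H - 1/2) * (u - s) ^ (H - 3/2)) • h s := by
  have hG : ∀ t ≤ T, Integrable (fbmTriangleIntegrand cH H h)
      ((volume.restrict (Ioo 0 t)).prod (volume.restrict (Ioo 0 t))) := fun t ht =>
    integrable_fbmTriangleIntegrand cH H h hH (hL2.mono_measure
      (Measure.restrict_mono (Ioo_subset_Ioc_self.trans (Ioc_subset_Ioc_right ht)) le_rfl))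
  refine ⟨(hG T le_rfl).integral_prod_right.congr ?_, fun t ht => ?_⟩
  · exact (ae_restrict_iff' measurableSet_Ioo).mpr (.of_forall fun u hu =>
      (intervalIntegral_smul_eq_setIntegral_fbmTriangleIntegrand cH H h hu.1 hu.2.le).symm)
  · rw [intervalIntegral.integral_of_le ht.1, intervalIntegral.integral_of_le ht.1,
      integral_Ioc_eq_integral_Ioo, integral_Ioc_eq_integral_Ioo,
      setIntegral_congr_fun measurableSet_Ioo fun s hs =>
        fbmKernel_smul_eq_setIntegral cH H h hs.1 hs.2,
      setIntegral_congr_fun measurableSet_Ioo fun u hu =>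
        intervalIntegral_smul_eq_setIntegral_fbmTriangleIntegrand cH H h hu.1 hu.2.le]
    exact integral_integral_swap (hG t ht.2)

/-- for `H ∈ (1/2,1)`, `T > 0` and `h ∈ L²([0,T];ℝ^d)`, the function
`D(u) = ∫_0^u c_H (u/s)^{H-1/2} (u-s)^{H-3/2} h(s) ds` is in `L¹((0,T);ℝ^d)` and
`∫_0^t K_H(t,s) h(s) ds = ∫_0^t D(u) du` for all `t ∈ [0,T]`: every Cameron–Martin path of
fBm with `H > 1/2` is absolutely continuous with a.e. derivative `D`. -/
theorem cameronMartin_absolutelyContinuous (H : ℝ) (hH : H ∈ Set.Ioo (1/2 : ℝ) 1)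
    (cH : ℝ) (hcH : 0 < cH)
    (d : ℕ) (T : ℝ) (hT : 0 < T)
    (h : ℝ → EuclideanSpace ℝ (Fin d))
    (hL2 : MeasureTheory.MemLp h 2 (MeasureTheory.volume.restrict (Set.Ioc 0 T))) :
    MeasureTheory.IntegrableOn
      (fun u => ∫ s in (0:ℝ)..u, (cH * (u / s) ^ (H - 1/2) * (u - s) ^ (H - 3/2)) • h s)
      (Set.Ioo 0 T) ∧
    ∀ t ∈ Set.Icc (0:ℝ) T,
      (∫ s in (0:ℝ)..t, fbmKernel cH H t s • h s)
        = ∫ u in (0:ℝ)..t,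
            ∫ s in (0:ℝ)..u, (cH * (u / s) ^ (H - 1/2) * (u - s) ^ (H - 3/2)) • h s :=
  cameronMartin_absolutelyContinuous_general H hH cH d T h hL2
end
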